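/- arXiv:2201.01686 — 6 statements merged into one kernel-verified Lean document; each statement's English description precedes it below -/
import Mathlib

section
/- Each value-iteration iterate is nondecreasing in the AoI coordinate: for all k ≥ 0, all battery states q ∈ {0,...,B}, and all 1 ≤ Δ₁ ≤ Δ₂, V_k(Δ₁, q) ≤ V_k(Δ₂, q). -/
/-- Case-wise state-action value function built from a value function `V`
for the energy-harvesting update MDP. -/
noncomputable def Qf (B : ℕ) (p lam w Cr : ℝ) (V : ℕ → ℕ → ℝ) (Δ q a : ℕ) : ℝ :=
  if a = 0 then
    if q = B then (Δ : ℝ) + V (Δ+1) B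
    else (Δ : ℝ) + lam * V (Δ+1) (q+1) + (1-lam) * V (Δ+1) q
  else
    if q = 0 then (Δ : ℝ) + w*Cr + p*lam*V (Δ+1) 1 + p*(1-lam)*V (Δ+1) 0
      + (1-p)*lam*V 1 1 + (1-p)*(1-lam)*V 1 0
    else (Δ : ℝ) + p*lam*V (Δ+1) q + p*(1-lam)*V (Δ+1) (q-1)
      + (1-p)*lam*V 1 q + (1-p)*(1-lam)*V 1 (q-1)

/-- Value-iteration iterates: `Vit k` is the k-th iterate, `Vit 0 ≡ 0`. -/
noncomputable def Vit (B : ℕ) (p lam w Cr : ℝ) : ℕ → ℕ → ℕ → ℝ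
  | 0, _, _ => 0
  | (k+1), Δ, q => min (Qf B p lam w Cr (Vit B p lam w Cr k) Δ q 0)
                       (Qf B p lam w Cr (Vit B p lam w Cr k) Δ q 1)

/-- Each value-iteration iterate is nondecreasing in the AoI coordinate. -/
theorem iterates_nondecreasing_in_AoI (B : ℕ) (hB : 2 ≤ B) (p lam w Cr : ℝ)
    (hp : p ∈ Set.Icc (0:ℝ) 1) (hlam : lam ∈ Set.Icc (0:ℝ) 1)
    (hw : 0 ≤ w) (hCr : 0 ≤ Cr) :
    ∀ k : ℕ, ∀ q ≤ B, ∀ Δ₁ Δ₂ : ℕ, 1 ≤ Δ₁ → Δ₁ ≤ Δ₂ →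
      Vit B p lam w Cr k Δ₁ q ≤ Vit B p lam w Cr k Δ₂ q := by
  obtain ⟨hp0, hp1⟩ := hp
  obtain ⟨hl0, hl1⟩ := hlam
  have hp1' : (0:ℝ) ≤ 1 - p := by linarith
  have hl1' : (0:ℝ) ≤ 1 - lam := by linarith
  intro k
  induction k with
  | zero => intro q hq Δ₁ Δ₂ h1 h12; simp [Vit]
  | succ k ih =>
    intro q hq Δ₁ Δ₂ h1 h12
    have hΔ : (Δ₁ : ℝ) ≤ (Δ₂ : ℝ) := by exact_mod_cast h12
    have hV : ∀ q' ≤ B, Vit B p lam w Cr k (Δ₁+1) q' ≤ Vit B p lam w Cr k (Δ₂+1) q' := by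
      intro q' hq'
      exact ih q' hq' (Δ₁+1) (Δ₂+1) (by omega) (by omega)
    have h0 : Qf B p lam w Cr (Vit B p lam w Cr k) Δ₁ q 0
        ≤ Qf B p lam w Cr (Vit B p lam w Cr k) Δ₂ q 0 := by
      unfold Qf
      simp only [if_pos rfl, ite_true]
      by_cases hqB : q = B
      · simp only [if_pos hqB]
        have := hV B le_rfl
        linarith
      · simp only [if_neg hqB]
        have h1 := hV (q+1) (by omega)
        have h2 := hV q hq
        nlinarith [mul_le_mul_of_nonneg_left h1 hl0,
          mul_le_mul_of_nonneg_left h2 hl1']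
    have h1' : Qf B p lam w Cr (Vit B p lam w Cr k) Δ₁ q 1
        ≤ Qf B p lam w Cr (Vit B p lam w Cr k) Δ₂ q 1 := by
      unfold Qf
      simp only [if_neg (one_ne_zero)]
      have hpl : (0:ℝ) ≤ p * lam := mul_nonneg hp0 hl0
      have hpl' : (0:ℝ) ≤ p * (1 - lam) := mul_nonneg hp0 hl1'
      by_cases hq0 : q = 0
      · simp only [if_pos hq0]
        have ha := hV 1 (by omega)
        have hb := hV 0 (by omega)
        nlinarith [mul_le_mul_of_nonneg_left ha hpl,
          mul_le_mul_of_nonneg_left hb hpl']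
      · simp only [if_neg hq0]
        have ha := hV q hq
        have hb := hV (q-1) (by omega)
        nlinarith [mul_le_mul_of_nonneg_left ha hpl,
          mul_le_mul_of_nonneg_left hb hpl']
    show min _ _ ≤ min _ _
    exact min_le_min h0 h1'
end

section
/- Each value-iteration iterate is nonincreasing in the battery coordinate: for all k ≥ 0, all Δ ≥ 1, and all q ∈ {0,...,B-1}, V_k(Δ, q+1) ≤ V_k(Δ, q). -/
/-- Each value-iteration iterate is nonincreasing in the battery coordinate. -/
theorem iterates_nonincreasing_in_battery (B : ℕ) (hB : 2 ≤ B) (p lam w Cr : ℝ)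
    (hp : p ∈ Set.Icc (0:ℝ) 1) (hlam : lam ∈ Set.Icc (0:ℝ) 1)
    (hw : 0 ≤ w) (hCr : 0 ≤ Cr) :
    ∀ k : ℕ, ∀ Δ : ℕ, 1 ≤ Δ → ∀ q : ℕ, q < B →
      Vit B p lam w Cr k Δ (q+1) ≤ Vit B p lam w Cr k Δ q := by
  obtain ⟨hp0, hp1⟩ := hp
  obtain ⟨hl0, hl1⟩ := hlam
  have hp1' : 0 ≤ 1 - p := by linarith
  have hl1' : 0 ≤ 1 - lam := by linarith
  intro k
  induction k with
  | zero => intro Δ _ q _; simp [Vit]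
  | succ k ih =>
    intro Δ hΔ q hq
    simp only [Vit]
    apply min_le_min
    · -- action 0
      by_cases hqB : q + 1 = B
      · have hq1 : q ≠ B := by omega
        simp only [Qf, if_pos rfl, if_pos hqB, if_neg hq1, if_true]
        have h1 := ih (Δ+1) (by omega) (B-1) (by omega)
        have hB1 : B - 1 + 1 = B := by omega
        rw [hB1] at h1
        have hBq : q = B - 1 := by omega
        rw [hBq, hB1]
        nlinarith [mul_le_mul_of_nonneg_left h1 hl1']
      · have hq1 : q ≠ B := by omega
        simp only [Qf, if_pos rfl, if_neg hqB, if_neg hq1, if_true]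
        have h1 := ih (Δ+1) (by omega) (q+1) (by omega)
        have h2 := ih (Δ+1) (by omega) q (by omega)
        nlinarith [mul_le_mul_of_nonneg_left h1 hl0,
          mul_le_mul_of_nonneg_left h2 hl1']
    · -- action 1
      have hne : (1:ℕ) ≠ 0 := one_ne_zero
      by_cases hq0 : q = 0
      · subst hq0
        simp only [Qf, if_neg hne, if_pos rfl]
        norm_num
        nlinarith [mul_nonneg hw hCr]
      · have hq0' : q + 1 ≠ 0 := by omega
        simp only [Qf, if_neg hne, if_neg hq0', if_neg hq0]
        have hqq : q + 1 - 1 = q := by omega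
        rw [hqq]
        have hq1 : q - 1 + 1 = q := by omega
        have h1 := ih (Δ+1) (by omega) q (by omega)
        have h2 := ih (Δ+1) (by omega) (q-1) (by omega)
        have h3 := ih 1 (by omega) q (by omega)
        have h4 := ih 1 (by omega) (q-1) (by omega)
        rw [hq1] at h2 h4
        nlinarith [mul_le_mul_of_nonneg_left h1 (mul_nonneg hp0 hl0),
          mul_le_mul_of_nonneg_left h2 (mul_nonneg hp0 hl1'),
          mul_le_mul_of_nonneg_left h3 (mul_nonneg hp1' hl0),
          mul_le_mul_of_nonneg_left h4 (mul_nonneg hp1' hl1')]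
end

section
/- Preservation of the supermodularity-type inequality under the Bellman operator: suppose V : ℕ₊ × {0,...,B} → ℝ is nondecreasing in Δ, nonincreasing in q, and satisfies V(Δ+1,q+1) + p·V(Δ,q) ≥ V(Δ,q+1) + p·V(Δ+1,q) for all Δ ≥ 1 and q ∈ {0,...,B-1}. Then the Bellman update TV (the pointwise minimum over actions of the Q-functions built from V) satisfies the same inequality: (TV)(Δ+1,q+1) + p·(TV)(Δ,q) ≥ (TV)(Δ,q+1) + p·(TV)(Δ+1,q). -/
/-- Preservation of the supermodularity-type cross inequality under the
Bellman operator `T V (Δ,q) = min_a Q(V,Δ,q,a)`. -/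
theorem bellman_preserves_cross_inequality (B : ℕ) (hB : 2 ≤ B) (p lam w Cr : ℝ)
    (hp : p ∈ Set.Icc (0:ℝ) 1) (hlam : lam ∈ Set.Icc (0:ℝ) 1)
    (hw : 0 ≤ w) (hCr : 0 ≤ Cr) (V : ℕ → ℕ → ℝ)
    (hVΔ : ∀ q ≤ B, ∀ Δ₁ Δ₂ : ℕ, 1 ≤ Δ₁ → Δ₁ ≤ Δ₂ → V Δ₁ q ≤ V Δ₂ q)
    (hVq : ∀ Δ : ℕ, 1 ≤ Δ → ∀ q : ℕ, q < B → V Δ (q+1) ≤ V Δ q)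
    (hcross : ∀ Δ : ℕ, 1 ≤ Δ → ∀ q : ℕ, q < B →
      V Δ (q+1) + p * V (Δ+1) q ≤ V (Δ+1) (q+1) + p * V Δ q) :
    ∀ Δ : ℕ, 1 ≤ Δ → ∀ q : ℕ, q < B →
      min (Qf B p lam w Cr V Δ (q+1) 0) (Qf B p lam w Cr V Δ (q+1) 1)
        + p * min (Qf B p lam w Cr V (Δ+1) q 0) (Qf B p lam w Cr V (Δ+1) q 1) ≤
      min (Qf B p lam w Cr V (Δ+1) (q+1) 0) (Qf B p lam w Cr V (Δ+1) (q+1) 1)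
        + p * min (Qf B p lam w Cr V Δ q 0) (Qf B p lam w Cr V Δ q 1) := by
  obtain ⟨hp0, hp1⟩ := hp
  obtain ⟨hl0, hl1⟩ := hlam
  intro Δ hΔ q hq
  have hqB : q ≠ B := Nat.ne_of_lt hq
  have hp1' : (0:ℝ) ≤ 1 - p := by linarith
  have hl1' : (0:ℝ) ≤ 1 - lam := by linarith
  -- action pair (0,0)
  have h00 : Qf B p lam w Cr V Δ (q+1) 0 + p * Qf B p lam w Cr V (Δ+1) q 0
      ≤ Qf B p lam w Cr V (Δ+1) (q+1) 0 + p * Qf B p lam w Cr V Δ q 0 := by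
    have cq := hcross (Δ+1) (by omega) q hq
    by_cases hq1 : q + 1 = B
    · have mB : V (Δ+1) B ≤ V (Δ+1+1) B := hVΔ B le_rfl (Δ+1) (Δ+1+1) (by omega) (by omega)
      rw [hq1] at cq
      have F1 : (0:ℝ) ≤ lam * ((1-p) * (V (Δ+1+1) B - V (Δ+1) B)) :=
        mul_nonneg hl0 (mul_nonneg hp1' (by linarith))
      have F2 : (0:ℝ) ≤ (1-lam) * (V (Δ+1+1) B + p * V (Δ+1) q - (V (Δ+1) B + p * V (Δ+1+1) q)) :=
        mul_nonneg hl1' (by linarith)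
      simp [Qf, hq1, hqB]
      push_cast
      linarith [F1, F2]
    · have cq1 := hcross (Δ+1) (by omega) (q+1) (lt_of_le_of_ne hq hq1)
      have F1 : (0:ℝ) ≤ lam * (V (Δ+1+1) (q+1+1) + p * V (Δ+1) (q+1) - (V (Δ+1) (q+1+1) + p * V (Δ+1+1) (q+1))) :=
        mul_nonneg hl0 (by linarith)
      have F2 : (0:ℝ) ≤ (1-lam) * (V (Δ+1+1) (q+1) + p * V (Δ+1) q - (V (Δ+1) (q+1) + p * V (Δ+1+1) q)) :=
        mul_nonneg hl1' (by linarith)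
      simp [Qf, hq1, hqB]
      push_cast
      linarith [F1, F2]
  -- action pair (1,0)
  have h10 : Qf B p lam w Cr V Δ (q+1) 1 + p * Qf B p lam w Cr V (Δ+1) q 0
      ≤ Qf B p lam w Cr V (Δ+1) (q+1) 1 + p * Qf B p lam w Cr V Δ q 0 := by
    simp [Qf, hqB, (by omega : q + 1 ≠ 0)]
    push_cast
    nlinarith [hp1]
  -- action pair (1,1)
  have h11 : Qf B p lam w Cr V Δ (q+1) 1 + p * Qf B p lam w Cr V (Δ+1) q 1
      ≤ Qf B p lam w Cr V (Δ+1) (q+1) 1 + p * Qf B p lam w Cr V Δ q 1 := by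
    by_cases hq0 : q = 0
    · subst hq0
      have m1 : V (Δ+1) 1 ≤ V (Δ+1+1) 1 := hVΔ 1 (by omega) (Δ+1) (Δ+1+1) (by omega) (by omega)
      have m0 : V (Δ+1) 0 ≤ V (Δ+1+1) 0 := hVΔ 0 (by omega) (Δ+1) (Δ+1+1) (by omega) (by omega)
      have F1 : (0:ℝ) ≤ p * ((1-p) * (lam * (V (Δ+1+1) 1 - V (Δ+1) 1))) :=
        mul_nonneg hp0 (mul_nonneg hp1' (mul_nonneg hl0 (by linarith)))
      have F2 : (0:ℝ) ≤ p * ((1-p) * ((1-lam) * (V (Δ+1+1) 0 - V (Δ+1) 0))) :=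
        mul_nonneg hp0 (mul_nonneg hp1' (mul_nonneg hl1' (by linarith)))
      simp [Qf]
      push_cast
      linarith [F1, F2]
    · have cq := hcross (Δ+1) (by omega) q hq
      have cqm := hcross (Δ+1) (by omega) (q-1) (by omega)
      rw [show q - 1 + 1 = q by omega] at cqm
      have F1 : (0:ℝ) ≤ p * (lam * (V (Δ+1+1) (q+1) + p * V (Δ+1) q - (V (Δ+1) (q+1) + p * V (Δ+1+1) q))) :=
        mul_nonneg hp0 (mul_nonneg hl0 (by linarith))
      have F2 : (0:ℝ) ≤ p * ((1-lam) * (V (Δ+1+1) q + p * V (Δ+1) (q-1) - (V (Δ+1) q + p * V (Δ+1+1) (q-1)))) :=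
        mul_nonneg hp0 (mul_nonneg hl1' (by linarith))
      simp [Qf, hq0, (by omega : q + 1 ≠ 0)]
      push_cast
      linarith [F1, F2]
  -- action pair (0,1)
  have h01 : Qf B p lam w Cr V Δ (q+1) 0 + p * Qf B p lam w Cr V (Δ+1) q 1
      ≤ Qf B p lam w Cr V (Δ+1) (q+1) 0 + p * Qf B p lam w Cr V Δ q 1 := by
    by_cases hq0 : q = 0
    · subst hq0
      have hq1 : (0:ℕ) + 1 ≠ B := by omega
      have c0 := hcross (Δ+1) (by omega) 0 (by omega)
      have c1 := hcross (Δ+1) (by omega) 1 (by omega)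
      norm_num at c0 c1
      have m1 : V (Δ+1) 1 ≤ V (Δ+1+1) 1 := hVΔ 1 (by omega) (Δ+1) (Δ+1+1) (by omega) (by omega)
      have t1 : p * (p * (V (Δ+1+1) 1 - V (Δ+1) 1)) ≤ V (Δ+1+1) 2 - V (Δ+1) 2 := by
        nlinarith [mul_nonneg (mul_nonneg hp0 hp1') (by linarith : (0:ℝ) ≤ V (Δ+1+1) 1 - V (Δ+1) 1)]
      have t0 : p * (p * (V (Δ+1+1) 0 - V (Δ+1) 0)) ≤ V (Δ+1+1) 1 - V (Δ+1) 1 := by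
        have m0 : V (Δ+1) 0 ≤ V (Δ+1+1) 0 := hVΔ 0 (by omega) (Δ+1) (Δ+1+1) (by omega) (by omega)
        nlinarith [mul_nonneg (mul_nonneg hp0 hp1') (by linarith : (0:ℝ) ≤ V (Δ+1+1) 0 - V (Δ+1) 0)]
      have F1 : (0:ℝ) ≤ lam * (V (Δ+1+1) 2 - V (Δ+1) 2 - p * (p * (V (Δ+1+1) 1 - V (Δ+1) 1))) :=
        mul_nonneg hl0 (by linarith)
      have F2 : (0:ℝ) ≤ (1-lam) * (V (Δ+1+1) 1 - V (Δ+1) 1 - p * (p * (V (Δ+1+1) 0 - V (Δ+1) 0))) :=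
        mul_nonneg hl1' (by linarith)
      simp [Qf, hq1]
      push_cast
      linarith [F1, F2]
    · have cq := hcross (Δ+1) (by omega) q hq
      have cqm := hcross (Δ+1) (by omega) (q-1) (by omega)
      rw [show q - 1 + 1 = q by omega] at cqm
      have sq : p * (V (Δ+1+1) q - V (Δ+1) q) ≤ V (Δ+1+1) (q+1) - V (Δ+1) (q+1) := by linarith
      have sqm : p * (V (Δ+1+1) (q-1) - V (Δ+1) (q-1)) ≤ V (Δ+1+1) q - V (Δ+1) q := by linarith
      have mq : V (Δ+1) q ≤ V (Δ+1+1) q := hVΔ q (by omega) (Δ+1) (Δ+1+1) (by omega) (by omega)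
      have tqm : p * (p * (V (Δ+1+1) (q-1) - V (Δ+1) (q-1))) ≤ V (Δ+1+1) (q+1) - V (Δ+1) (q+1) := by
        nlinarith [mul_le_mul_of_nonneg_left sqm hp0, sq]
      by_cases hq1 : q + 1 = B
      · have mB : V (Δ+1) B ≤ V (Δ+1+1) B := hVΔ B le_rfl (Δ+1) (Δ+1+1) (by omega) (by omega)
        rw [hq1] at sq tqm
        have tq : p * (p * (V (Δ+1+1) q - V (Δ+1) q)) ≤ V (Δ+1+1) B - V (Δ+1) B := by
          nlinarith [mul_nonneg (mul_nonneg hp0 hp1') (by linarith : (0:ℝ) ≤ V (Δ+1+1) q - V (Δ+1) q)]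
        have F1 : (0:ℝ) ≤ lam * (V (Δ+1+1) B - V (Δ+1) B - p * (p * (V (Δ+1+1) q - V (Δ+1) q))) :=
          mul_nonneg hl0 (by linarith)
        have F2 : (0:ℝ) ≤ (1-lam) * (V (Δ+1+1) B - V (Δ+1) B - p * (p * (V (Δ+1+1) (q-1) - V (Δ+1) (q-1)))) :=
          mul_nonneg hl1' (by linarith)
        simp [Qf, hq1, hq0]
        push_cast
        linarith [F1, F2]
      · have cq1 := hcross (Δ+1) (by omega) (q+1) (lt_of_le_of_ne hq hq1)
        have sq1 : p * (V (Δ+1+1) (q+1) - V (Δ+1) (q+1)) ≤ V (Δ+1+1) (q+1+1) - V (Δ+1) (q+1+1) := by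
          linarith
        have tq : p * (p * (V (Δ+1+1) q - V (Δ+1) q)) ≤ V (Δ+1+1) (q+1+1) - V (Δ+1) (q+1+1) := by
          nlinarith [mul_le_mul_of_nonneg_left sq hp0, sq1]
        have F1 : (0:ℝ) ≤ lam * (V (Δ+1+1) (q+1+1) - V (Δ+1) (q+1+1) - p * (p * (V (Δ+1+1) q - V (Δ+1) q))) :=
          mul_nonneg hl0 (by linarith)
        have F2 : (0:ℝ) ≤ (1-lam) * (V (Δ+1+1) (q+1) - V (Δ+1) (q+1) - p * (p * (V (Δ+1+1) (q-1) - V (Δ+1) (q-1)))) :=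
          mul_nonneg hl1' (by linarith)
        simp [Qf, hq1, hq0]
        push_cast
        linarith [F1, F2]
  -- combine
  rcases le_total (Qf B p lam w Cr V (Δ+1) (q+1) 0) (Qf B p lam w Cr V (Δ+1) (q+1) 1) with h1 | h1 <;>
    rcases le_total (Qf B p lam w Cr V Δ q 0) (Qf B p lam w Cr V Δ q 1) with h2 | h2
  · rw [min_eq_left h1, min_eq_left h2]
    linarith [min_le_left (Qf B p lam w Cr V Δ (q+1) 0) (Qf B p lam w Cr V Δ (q+1) 1),
      mul_le_mul_of_nonneg_left (min_le_left (Qf B p lam w Cr V (Δ+1) q 0) (Qf B p lam w Cr V (Δ+1) q 1)) hp0, h00]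
  · rw [min_eq_left h1, min_eq_right h2]
    linarith [min_le_left (Qf B p lam w Cr V Δ (q+1) 0) (Qf B p lam w Cr V Δ (q+1) 1),
      mul_le_mul_of_nonneg_left (min_le_right (Qf B p lam w Cr V (Δ+1) q 0) (Qf B p lam w Cr V (Δ+1) q 1)) hp0, h01]
  · rw [min_eq_right h1, min_eq_left h2]
    linarith [min_le_right (Qf B p lam w Cr V Δ (q+1) 0) (Qf B p lam w Cr V Δ (q+1) 1),
      mul_le_mul_of_nonneg_left (min_le_left (Qf B p lam w Cr V (Δ+1) q 0) (Qf B p lam w Cr V (Δ+1) q 1)) hp0, h10]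
  · rw [min_eq_right h1, min_eq_right h2]
    linarith [min_le_right (Qf B p lam w Cr V Δ (q+1) 0) (Qf B p lam w Cr V Δ (q+1) 1),
      mul_le_mul_of_nonneg_left (min_le_right (Qf B p lam w Cr V (Δ+1) q 0) (Qf B p lam w Cr V (Δ+1) q 1)) hp0, h11]
end

section
/- Submodularity of the Q-function at empty battery (q = 0): if V : ℕ₊ × {0,...,B} → ℝ is nondecreasing in its first argument and p, λ ∈ [0,1], then for every Δ ≥ 1, Q(V,Δ+1,0,0) - Q(V,Δ+1,0,1) - [Q(V,Δ,0,0) - Q(V,Δ,0,1)] = (1-p)λ(V(Δ+2,1) - V(Δ+1,1)) + (1-p)(1-λ)(V(Δ+2,0) - V(Δ+1,0)) ≥ 0. -/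
/-- Submodularity of the Q-function at empty battery (q = 0):
the algebraic identity for the double difference and its nonnegativity. -/
theorem submodularity_empty_battery (B : ℕ) (hB : 1 ≤ B) (p lam w Cr : ℝ)
    (hp : p ∈ Set.Icc (0:ℝ) 1) (hlam : lam ∈ Set.Icc (0:ℝ) 1)
    (hw : 0 ≤ w) (hCr : 0 ≤ Cr) (V : ℕ → ℕ → ℝ)
    (hV : ∀ q ≤ B, ∀ Δ₁ Δ₂ : ℕ, 1 ≤ Δ₁ → Δ₁ ≤ Δ₂ → V Δ₁ q ≤ V Δ₂ q)
    (Δ : ℕ) (hΔ : 1 ≤ Δ) :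
    (Qf B p lam w Cr V (Δ+1) 0 0 - Qf B p lam w Cr V (Δ+1) 0 1
      - (Qf B p lam w Cr V Δ 0 0 - Qf B p lam w Cr V Δ 0 1)
      = (1-p)*lam*(V (Δ+2) 1 - V (Δ+1) 1) + (1-p)*(1-lam)*(V (Δ+2) 0 - V (Δ+1) 0)) ∧
    0 ≤ (1-p)*lam*(V (Δ+2) 1 - V (Δ+1) 1) + (1-p)*(1-lam)*(V (Δ+2) 0 - V (Δ+1) 0) := by
  obtain ⟨hp0, hp1⟩ := hp
  obtain ⟨hl0, hl1⟩ := hlam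
  have hB0 : (0 : ℕ) ≠ B := by omega
  constructor
  · simp only [Qf, if_pos rfl, if_neg hB0, if_neg (by norm_num : (1:ℕ) ≠ 0)]
    push_cast
    ring
  · have h1 : V (Δ+1) 1 ≤ V (Δ+2) 1 := hV 1 hB (Δ+1) (Δ+2) (by omega) (by omega)
    have h2 : V (Δ+1) 0 ≤ V (Δ+2) 0 := hV 0 (by omega) (Δ+1) (Δ+2) (by omega) (by omega)
    have := mul_nonneg (mul_nonneg (by linarith : (0:ℝ) ≤ 1-p) hl0) (by linarith : (0:ℝ) ≤ V (Δ+2) 1 - V (Δ+1) 1)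
    have := mul_nonneg (mul_nonneg (by linarith : (0:ℝ) ≤ 1-p) (by linarith : (0:ℝ) ≤ 1-lam)) (by linarith : (0:ℝ) ≤ V (Δ+2) 0 - V (Δ+1) 0)
    linarith
end

section
/- Submodularity of the Q-function in the interior battery case: let 1 ≤ q ≤ B-1, p, λ ∈ [0,1], and suppose V : ℕ₊ × {0,...,B} → ℝ satisfies V(Δ+1,r+1) - V(Δ,r+1) ≥ p[V(Δ+1,r) - V(Δ,r)] for all Δ ≥ 1, r ∈ {0,...,B-1}, and V is nondecreasing in Δ. Then Q(V,Δ+1,q,0) - Q(V,Δ+1,q,1) ≥ Q(V,Δ,q,0) - Q(V,Δ,q,1) for all Δ ≥ 1. -/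
/-- Submodularity of the Q-function in the interior battery case. -/
theorem submodularity_interior (B : ℕ) (p lam w Cr : ℝ)
    (hp : p ∈ Set.Icc (0:ℝ) 1) (hlam : lam ∈ Set.Icc (0:ℝ) 1)
    (q : ℕ) (hq1 : 1 ≤ q) (hqB : q < B) (V : ℕ → ℕ → ℝ)
    (hinc : ∀ Δ : ℕ, 1 ≤ Δ → ∀ r : ℕ, r < B →
      p * (V (Δ+1) r - V Δ r) ≤ V (Δ+1) (r+1) - V Δ (r+1))
    (hV : ∀ q' ≤ B, ∀ Δ₁ Δ₂ : ℕ, 1 ≤ Δ₁ → Δ₁ ≤ Δ₂ → V Δ₁ q' ≤ V Δ₂ q') :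
    ∀ Δ : ℕ, 1 ≤ Δ →
      Qf B p lam w Cr V Δ q 0 - Qf B p lam w Cr V Δ q 1 ≤
      Qf B p lam w Cr V (Δ+1) q 0 - Qf B p lam w Cr V (Δ+1) q 1 := by
  intro Δ hΔ
  have hqB' : q ≠ B := Nat.ne_of_lt hqB
  have hq0 : q ≠ 0 := Nat.one_le_iff_ne_zero.mp hq1
  have h1 := hinc (Δ+1) (by omega) q hqB
  have h2 := hinc (Δ+1) (by omega) (q-1) (by omega)
  rw [Nat.sub_add_cancel hq1] at h2
  simp only [Qf, if_pos rfl, if_neg hqB', if_neg hq0, if_neg (by norm_num : (1:ℕ) ≠ 0), if_true]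
  obtain ⟨hp0, hp1⟩ := hp
  obtain ⟨hl0, hl1⟩ := hlam
  nlinarith [mul_le_mul_of_nonneg_left h1 hl0,
    mul_le_mul_of_nonneg_left h2 (by linarith : (0:ℝ) ≤ 1 - lam)]
end

section
/- Submodularity of the Q-function at full battery (q = B): if p, λ ∈ [0,1] and V : ℕ₊ × {0,...,B} → ℝ satisfies V(Δ+1,B) - V(Δ,B) ≥ p[V(Δ+1,B-1) - V(Δ,B-1)] for all Δ ≥ 1, then for all Δ ≥ 1: Q(V,Δ+1,B,0) - Q(V,Δ+1,B,1) - [Q(V,Δ,B,0) - Q(V,Δ,B,1)] = (1-λ)[V(Δ+2,B) - V(Δ+1,B)] - p(1-λ)[V(Δ+2,B-1) - V(Δ+1,B-1)] + λ[V(Δ+2,B) - V(Δ+1,B)] - pλ[V(Δ+2,B) - V(Δ+1,B)] ≥ 0, provided additionally V(Δ+2,B) ≥ V(Δ+1,B). -/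
/-- Submodularity of the Q-function at full battery (q = B): the algebraic
expansion of the double difference and its nonnegativity. -/
theorem submodularity_full_battery (B : ℕ) (hB : 2 ≤ B) (p lam w Cr : ℝ)
    (hp : p ∈ Set.Icc (0:ℝ) 1) (hlam : lam ∈ Set.Icc (0:ℝ) 1)
    (V : ℕ → ℕ → ℝ)
    (hinc : ∀ Δ : ℕ, 1 ≤ Δ →
      p * (V (Δ+1) (B-1) - V Δ (B-1)) ≤ V (Δ+1) B - V Δ B)
    (hmono : ∀ Δ : ℕ, 1 ≤ Δ → V (Δ+1) B ≤ V (Δ+2) B) :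
    ∀ Δ : ℕ, 1 ≤ Δ →
      (Qf B p lam w Cr V (Δ+1) B 0 - Qf B p lam w Cr V (Δ+1) B 1
        - (Qf B p lam w Cr V Δ B 0 - Qf B p lam w Cr V Δ B 1)
        = (1-lam)*(V (Δ+2) B - V (Δ+1) B) - p*(1-lam)*(V (Δ+2) (B-1) - V (Δ+1) (B-1))
          + lam*(V (Δ+2) B - V (Δ+1) B) - p*lam*(V (Δ+2) B - V (Δ+1) B)) ∧
      0 ≤ Qf B p lam w Cr V (Δ+1) B 0 - Qf B p lam w Cr V (Δ+1) B 1
        - (Qf B p lam w Cr V Δ B 0 - Qf B p lam w Cr V Δ B 1) := by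
  intro Δ hΔ
  have hB0 : B ≠ 0 := by omega
  obtain ⟨hp0, hp1⟩ := hp
  obtain ⟨hl0, hl1⟩ := hlam
  have h1 := hinc (Δ+1) (by omega)
  have h2 := hmono Δ hΔ
  have hq : Qf B p lam w Cr V (Δ+1) B 0 - Qf B p lam w Cr V (Δ+1) B 1
        - (Qf B p lam w Cr V Δ B 0 - Qf B p lam w Cr V Δ B 1)
        = (1-lam)*(V (Δ+2) B - V (Δ+1) B) - p*(1-lam)*(V (Δ+2) (B-1) - V (Δ+1) (B-1))
          + lam*(V (Δ+2) B - V (Δ+1) B) - p*lam*(V (Δ+2) B - V (Δ+1) B) := by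
    simp only [Qf, if_pos rfl, if_neg hB0]
    push_cast
    have : Δ + 1 + 1 = Δ + 2 := by ring
    rw [this]
    ring
  refine ⟨hq, ?_⟩
  rw [hq]
  nlinarith [mul_nonneg hl0 (sub_nonneg.2 hp1), mul_nonneg (sub_nonneg.2 hl1) (sub_nonneg.2 (le_trans (by nlinarith : p*(V (Δ+2) (B-1) - V (Δ+1) (B-1)) ≤ p*(V (Δ+2) (B-1) - V (Δ+1) (B-1))) h1))]
end
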